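/- arXiv:2511.14176 — 2 statements merged into one kernel-verified Lean document; each statement's English description precedes it below -/
import Mathlib

section
/- Let D ≥ 2 and suppose there exists a finite collection F of pairwise non-overlapping D-simplices on the moment curve γ_D whose vertex sets together cover exactly an n-point set A ⊆ γ_D, such that F is non-extendable (no triangulation of conv(A) with vertex set A contains every member of F as a face). Then there exists a finite collection F' of pairwise non-overlapping (D+1)-simplices on the moment curve γ_{D+1} whose vertex sets together cover exactly an (n+1)-point set A' ⊆ γ_{D+1}, such that F' is non-extendable. -/
open Finset

/-- The moment curve in `ℝ^d`: `γ_d(s) = (s, s², …, s^d)`. -/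
def momentCurve (d : ℕ) (s : ℝ) : Fin d → ℝ := fun i => s ^ (i.1 + 1)

/-- The convex hull in `ℝ^d` of the points `γ_d(t i)` for `i ∈ σ`. -/
def mcConv (d : ℕ) {n : ℕ} (t : Fin n → ℝ) (σ : Finset (Fin n)) : Set (Fin d → ℝ) :=
  convexHull ℝ ((fun i => momentCurve d (t i)) '' ↑σ)

/-- Two simplices (given by index sets) overlap in `ℝ^d`:
`conv(σ) ∩ conv(τ) ⊋ conv(σ ∩ τ)`. -/
def Overlap (d : ℕ) {n : ℕ} (t : Fin n → ℝ) (σ τ : Finset (Fin n)) : Prop :=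
  ¬ (mcConv d t σ ∩ mcConv d t τ ⊆ mcConv d t (σ ∩ τ))

/-- Projection `ℝ^{d+1} → ℝ^d` forgetting the last coordinate. -/
def projLast (d : ℕ) (x : Fin (d + 1) → ℝ) : Fin d → ℝ := fun i => x i.castSucc

/-- `h_σ ≤ h_τ` on `conv(σ) ∩ conv(τ)`, phrased via the liftings to `γ_{d+1}`:
any point of the lifted `σ`-simplex lying above a point of the lifted `τ`-simplex
(same projection) has smaller or equal last coordinate. -/
def HeightLE (d : ℕ) {n : ℕ} (t : Fin n → ℝ) (σ τ : Finset (Fin n)) : Prop :=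
  ∀ q ∈ mcConv (d + 1) t σ, ∀ q' ∈ mcConv (d + 1) t τ,
    projLast d q = projLast d q' → q (Fin.last d) ≤ q' (Fin.last d)

/-- `σ <_{d+1} τ`: `σ` and `τ` overlap in `ℝ^d` and `h_σ ≤ h_τ` on the common domain. -/
def HeightLT (d : ℕ) {n : ℕ} (t : Fin n → ℝ) (σ τ : Finset (Fin n)) : Prop :=
  Overlap d t σ τ ∧ HeightLE d t σ τ

/-- A triangulation of `conv(A)` without new vertices: a family of `d`-simplices with
vertices in `A`, pairwise non-overlapping, whose convex hulls cover `conv(A)`. -/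
def IsTriangulation (d : ℕ) {n : ℕ} (t : Fin n → ℝ) (A : Finset (Fin n))
    (T : Finset (Finset (Fin n))) : Prop :=
  (∀ σ ∈ T, σ.card = d + 1 ∧ σ ⊆ A) ∧
  (∀ σ ∈ T, ∀ τ ∈ T, σ ≠ τ → ¬ Overlap d t σ τ) ∧
  (∀ p ∈ mcConv d t A, ∃ σ ∈ T, p ∈ mcConv d t σ)

/-- The triangulation `T` uses every vertex of `A`. -/
def UsesAllVertices {n : ℕ} (A : Finset (Fin n)) (T : Finset (Finset (Fin n))) : Prop :=
  ∀ a ∈ A, ∃ σ ∈ T, a ∈ σ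

/-- `σ` is a face of the triangulation `T`. -/
def IsFaceOf {n : ℕ} (σ : Finset (Fin n)) (T : Finset (Finset (Fin n))) : Prop :=
  ∃ ρ ∈ T, σ ⊆ ρ

/-- An alternating sequence `v₁ < ⋯ < v_k` of type (σ): odd-numbered entries
(0-indexed even positions) in `σ`, even-numbered entries in `τ`. -/
def AltSeq {n : ℕ} (σ τ : Finset (Fin n)) (k : ℕ) : Prop :=
  ∃ v : Fin k → Fin n, StrictMono v ∧
    ∀ i : Fin k, (i.1 % 2 = 0 → v i ∈ σ) ∧ (i.1 % 2 = 1 → v i ∈ τ)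

/-- `σ` and `τ` are `k`-interlacing. -/
def Interlacing {n : ℕ} (σ τ : Finset (Fin n)) (k : ℕ) : Prop :=
  AltSeq σ τ k ∨ AltSeq τ σ k

/-- `σ ≤_{d+1} T`: the height of `σ` is at most that of `T` on `conv(σ)`. -/
def SimplexLE (d : ℕ) {n : ℕ} (t : Fin n → ℝ) (σ : Finset (Fin n))
    (T : Finset (Finset (Fin n))) : Prop :=
  ∀ τ ∈ T, HeightLE d t σ τ

/-- `T ≤_{d+1} σ`: the height of `T` is at most that of `σ` on `conv(σ)`. -/
def TriLE (d : ℕ) {n : ℕ} (t : Fin n → ℝ) (T : Finset (Finset (Fin n)))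
    (σ : Finset (Fin n)) : Prop :=
  ∀ τ ∈ T, HeightLE d t τ σ


/-- Central projection from `γ_{D+1}(N)`, renormalized: the composite map sending
`γ_{D+1}(s)` to (a triangular-affine copy of) `γ_D(s)`. First, `NELpi` maps `x` to the
point of the line through `γ_{D+1}(N)` and `x` whose first coordinate is `0`. -/
noncomputable def NELpi (D : ℕ) (N : ℝ) (x : Fin (D+1) → ℝ) : Fin (D+1) → ℝ :=
  fun j => N ^ (j.1+1) + (N / (N - x 0)) * (x j - N ^ (j.1+1))

/-- Triangular renormalization of `NELpi`, landing in `ℝ^D`. -/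
noncomputable def NELphi (D : ℕ) (N : ℝ) (x : Fin (D+1) → ℝ) : Fin D → ℝ :=
  fun i => NELpi D N x i.castSucc - NELpi D N x i.succ / N

lemma momentCurve_apply (d : ℕ) (s : ℝ) (i : Fin d) : momentCurve d s i = s ^ (i.1+1) := rfl

lemma momentCurve_zero_apply (D : ℕ) (s : ℝ) : momentCurve (D+1) s 0 = s := by
  simp [momentCurve]

lemma momentCurve_injective (d : ℕ) (hd : 0 < d) : Function.Injective (momentCurve d) := by
  intro a b hab
  have := congrFun hab ⟨0, hd⟩
  simpa [momentCurve] using this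

lemma NELpi_zero {D : ℕ} {N : ℝ} {x : Fin (D+1) → ℝ} (h : N - x 0 ≠ 0) :
    NELpi D N x 0 = 0 := by
  simp only [NELpi]
  have h0 : ((0 : Fin (D+1)) : ℕ) = 0 := rfl
  rw [h0]
  field_simp
  ring

lemma NELphi_momentCurve {D : ℕ} {N s : ℝ} (hN : N ≠ 0) (hs : N - s ≠ 0) :
    NELphi D N (momentCurve (D+1) s) = momentCurve D s := by
  funext i
  have h0 : momentCurve (D+1) s 0 = s := momentCurve_zero_apply D s
  simp only [NELphi, NELpi, h0, momentCurve_apply, Fin.coe_castSucc, Fin.val_succ]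
  field_simp
  ring

lemma NELpi_combo {D : ℕ} {N : ℝ} {x : Fin (D+1) → ℝ} (hx : x 0 ≠ N) (hN : N ≠ 0)
    {a b : ℝ} (hab : a + b = 1) (hb : b ≠ 0) :
    NELpi D N (a • momentCurve (D+1) N + b • x) = NELpi D N x := by
  have ha : a = 1 - b := by linarith
  subst ha
  have hden : N - ((1-b) * N + b * x 0) = b * (N - x 0) := by ring
  have hx' : N - x 0 ≠ 0 := fun h => hx (by linarith [sub_eq_zero.mp h])
  have h2 : N * b - b * x 0 ≠ 0 := by
    rw [show N * b - b * x 0 = b * (N - x 0) from by ring]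
    exact mul_ne_zero hb hx'
  funext j
  simp only [NELpi, Pi.add_apply, Pi.smul_apply, smul_eq_mul, momentCurve_apply,
    momentCurve_zero_apply]
  rw [show ((0:Fin (D+1)):ℕ) = 0 from rfl, pow_one,
    show (N - ((1 - b) * N + b * x 0)) = b * (N - x 0) from by ring]
  rw [div_mul_eq_div_div]
  field_simp
  ring

lemma NELpi_inv {D : ℕ} {N : ℝ} {x : Fin (D+1) → ℝ} (hx : N - x 0 ≠ 0) (hN : N ≠ 0) :
    x = momentCurve (D+1) N + ((N - x 0)/N) • (NELpi D N x - momentCurve (D+1) N) := by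
  funext j
  simp only [NELpi, Pi.add_apply, Pi.smul_apply, Pi.sub_apply, smul_eq_mul,
    momentCurve_apply]
  field_simp
  ring

lemma NELpi_eq_of_phi_eq {D : ℕ} {N : ℝ} {x y : Fin (D+1) → ℝ}
    (hx : N - x 0 ≠ 0) (hy : N - y 0 ≠ 0) (hN : N ≠ 0)
    (h : NELphi D N x = NELphi D N y) : NELpi D N x = NELpi D N y := by
  funext j
  induction j using Fin.induction with
  | zero => rw [NELpi_zero hx, NELpi_zero hy]
  | succ i ih =>
    have hi := congrFun h i
    simp only [NELphi] at hi
    rw [ih] at hi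
    have : NELpi D N x i.succ / N = NELpi D N y i.succ / N := by linarith
    field_simp at this
    exact this

section Rep
variable {k : ℕ} {ι : Type} [DecidableEq ι]

lemma mem_hull_of_rep (f : ι → (Fin k → ℝ)) (σ : Finset ι)
    (w : ι → ℝ) (h0 : ∀ i ∈ σ, 0 ≤ w i) (h1 : ∑ i ∈ σ, w i = 1) :
    ∑ i ∈ σ, w i • f i ∈ convexHull ℝ (f '' ↑σ) := by
  rw [← Finset.centerMass_eq_of_sum_1 σ f h1]
  exact Finset.centerMass_mem_convexHull σ h0 (by rw [h1]; norm_num)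
    (fun i hi => Set.mem_image_of_mem f hi)

lemma rep_of_mem_hull {f : ι → (Fin k → ℝ)} {σ : Finset ι}
    (hf : Set.InjOn f ↑σ) {x : Fin k → ℝ} (hx : x ∈ convexHull ℝ (f '' ↑σ)) :
    ∃ w : ι → ℝ, (∀ i ∈ σ, 0 ≤ w i) ∧ ∑ i ∈ σ, w i = 1 ∧ ∑ i ∈ σ, w i • f i = x := by
  classical
  rw [← Finset.coe_image, Finset.convexHull_eq] at hx
  obtain ⟨W, hW0, hW1, hWx⟩ := hx
  have hinj : ∀ a ∈ σ, ∀ b ∈ σ, f a = f b → a = b := fun a ha b hb hab =>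
    hf (Finset.mem_coe.mpr ha) (Finset.mem_coe.mpr hb) hab
  refine ⟨fun i => W (f i), fun i hi => hW0 _ (Finset.mem_image_of_mem f hi), ?_, ?_⟩
  · rw [← hW1]; exact (Finset.sum_image hinj).symm
  · rw [← hWx, Finset.centerMass_eq_of_sum_1 _ id hW1]
    exact (Finset.sum_image (f := fun y => W y • id y) hinj).symm

end Rep

/-- No point `γ_{D+1}(N)` is an affine combination of at most `D+1` other
points of the moment curve. -/
lemma no_affine_relation {D : ℕ} {ι : Type} (σ : Finset ι) (p : ι → ℝ) (N : ℝ)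
    (hcard : σ.card ≤ D + 1) (hp : ∀ i ∈ σ, p i ≠ N) (a : ι → ℝ)
    (ha : ∑ i ∈ σ, a i = 1)
    (hsum : ∑ i ∈ σ, a i • momentCurve (D+1) (p i) = momentCurve (D+1) N) : False := by
  classical
  set q : Polynomial ℝ := ∏ i ∈ σ, (Polynomial.X - Polynomial.C (p i)) with hq
  have hqdeg : q.natDegree < D + 2 := by
    have : q.natDegree = ∑ i ∈ σ, (Polynomial.X - Polynomial.C (p i)).natDegree :=
      Polynomial.natDegree_prod _ _ (fun i _ => Polynomial.X_sub_C_ne_zero (p i))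
    rw [this]
    have : ∑ i ∈ σ, (Polynomial.X - Polynomial.C (p i)).natDegree = σ.card := by
      simp [Polynomial.natDegree_X_sub_C]
    omega
  have hcoord : ∀ j : Fin (D+1), ∑ i ∈ σ, a i * (p i) ^ (j.1+1) = N ^ (j.1+1) := by
    intro j
    have h := congrFun hsum j
    simpa [momentCurve, Finset.sum_apply] using h
  have hpow : ∀ m, m < D + 2 → ∑ i ∈ σ, a i * (p i) ^ m = N ^ m := by
    intro m hm
    rcases Nat.eq_zero_or_pos m with h0 | h1
    · simpa [h0] using ha
    · have hlt : m - 1 < D + 1 := by omega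
      have := hcoord ⟨m - 1, hlt⟩
      simpa [Nat.sub_add_cancel h1] using this
  have expand : ∀ x : ℝ, q.eval x = ∑ m ∈ Finset.range (D+2), q.coeff m * x ^ m :=
    fun x => Polynomial.eval_eq_sum_range' hqdeg x
  have heval : ∑ i ∈ σ, a i * q.eval (p i) = q.eval N := by
    calc ∑ i ∈ σ, a i * q.eval (p i)
        = ∑ i ∈ σ, ∑ m ∈ Finset.range (D+2), q.coeff m * (a i * (p i)^m) := by
          refine Finset.sum_congr rfl fun i _ => ?_
          rw [expand (p i), Finset.mul_sum]
          exact Finset.sum_congr rfl fun m _ => by ring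
      _ = ∑ m ∈ Finset.range (D+2), ∑ i ∈ σ, q.coeff m * (a i * (p i)^m) :=
          Finset.sum_comm
      _ = ∑ m ∈ Finset.range (D+2), q.coeff m * N ^ m := by
          refine Finset.sum_congr rfl fun m hm => ?_
          rw [← Finset.mul_sum, hpow m (Finset.mem_range.mp hm)]
      _ = q.eval N := (expand N).symm
  have hlhs : ∑ i ∈ σ, a i * q.eval (p i) = 0 := by
    refine Finset.sum_eq_zero fun i hi => ?_
    have hz : q.eval (p i) = 0 := by
      rw [hq, Polynomial.eval_prod]
      exact Finset.prod_eq_zero hi (by simp)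
    rw [hz, mul_zero]
  have hrhs : q.eval N ≠ 0 := by
    rw [hq, Polynomial.eval_prod]
    refine Finset.prod_ne_zero_iff.mpr fun i hi => ?_
    simp only [Polynomial.eval_sub, Polynomial.eval_X, Polynomial.eval_C]
    exact sub_ne_zero.mpr (Ne.symm (hp i hi))
  rw [heval] at hlhs
  exact hrhs hlhs

section Transfer
variable {D : ℕ} {ι : Type} [DecidableEq ι]

lemma hull_coord0_lt {N : ℝ} {p : ι → ℝ} {σ : Finset ι} (hp : ∀ i ∈ σ, p i < N)
    {x : Fin (D+1) → ℝ} (hx : x ∈ convexHull ℝ ((fun i => momentCurve (D+1) (p i)) '' ↑σ)) :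
    x 0 < N := by
  have hlin : IsLinearMap ℝ (fun y : Fin (D+1) → ℝ => y 0) :=
    ⟨fun a b => rfl, fun c a => rfl⟩
  have hsub : (fun i => momentCurve (D+1) (p i)) '' ↑σ ⊆ {y : Fin (D+1) → ℝ | y 0 < N} := by
    rintro y ⟨i, hi, rfl⟩
    simpa [momentCurve] using hp i hi
  exact convexHull_min hsub (convex_halfSpace_lt hlin N) hx

lemma hull_coord0_le {c : ℝ} {p : ι → ℝ} {σ : Finset ι} (hp : ∀ i ∈ σ, p i ≤ c)
    {x : Fin (D+1) → ℝ} (hx : x ∈ convexHull ℝ ((fun i => momentCurve (D+1) (p i)) '' ↑σ)) :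
    x 0 ≤ c := by
  have hlin : IsLinearMap ℝ (fun y : Fin (D+1) → ℝ => y 0) :=
    ⟨fun a b => rfl, fun c a => rfl⟩
  have hsub : (fun i => momentCurve (D+1) (p i)) '' ↑σ ⊆ {y : Fin (D+1) → ℝ | y 0 ≤ c} := by
    rintro y ⟨i, hi, rfl⟩
    simpa [momentCurve] using hp i hi
  exact convexHull_min hsub (convex_halfSpace_le hlin c) hx

lemma sum_wp_lt {N : ℝ} {p : ι → ℝ} {σ : Finset ι} (hp : ∀ i ∈ σ, p i < N)
    {w : ι → ℝ} (h0 : ∀ i ∈ σ, 0 ≤ w i) (h1 : ∑ i ∈ σ, w i = 1) :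
    ∑ i ∈ σ, w i * p i < N := by
  obtain ⟨i₀, hi₀, hwi₀⟩ : ∃ i ∈ σ, 0 < w i := by
    by_contra hcon
    push_neg at hcon
    have : ∑ i ∈ σ, w i = 0 :=
      Finset.sum_eq_zero fun i hi => le_antisymm (hcon i hi) (h0 i hi)
    rw [h1] at this; norm_num at this
  calc ∑ i ∈ σ, w i * p i < ∑ i ∈ σ, w i * N := by
        refine Finset.sum_lt_sum (fun i hi => ?_) ⟨i₀, hi₀, ?_⟩
        · exact mul_le_mul_of_nonneg_left (le_of_lt (hp i hi)) (h0 i hi)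
        · exact (mul_lt_mul_iff_right₀ hwi₀).mpr (hp i₀ hi₀)
    _ = N := by rw [← Finset.sum_mul, h1, one_mul]

/-- Key computation: `NELphi` of a convex combination of lifted moment-curve points is the
corresponding combination of downstairs moment-curve points, with explicitly
transformed weights. -/
lemma NELphi_rep_eq {N : ℝ} (hN : N ≠ 0) {p : ι → ℝ} {σ : Finset ι}
    (hp : ∀ i ∈ σ, p i < N) {w : ι → ℝ} (h0 : ∀ i ∈ σ, 0 ≤ w i) (h1 : ∑ i ∈ σ, w i = 1) :
    NELphi D N (∑ i ∈ σ, w i • momentCurve (D+1) (p i)) =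
      ∑ i ∈ σ, (w i * (N - p i) / (N - ∑ j ∈ σ, w j * p j)) • momentCurve D (p i) := by
  set x := ∑ i ∈ σ, w i • momentCurve (D+1) (p i) with hxdef
  set C := ∑ j ∈ σ, w j * p j with hC
  have hCN : C < N := sum_wp_lt hp h0 h1
  have hCne : N - C ≠ 0 := sub_ne_zero.mpr (ne_of_gt (by linarith))
  have hcoord : ∀ j : Fin (D+1), x j = ∑ i ∈ σ, w i * (p i) ^ (j.1+1) := by
    intro j
    simp [hxdef, momentCurve, Finset.sum_apply]
  have hx0 : x 0 = C := by
    rw [hcoord 0, hC]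
    refine Finset.sum_congr rfl fun i _ => ?_
    norm_num
  funext k
  have hA : x k.castSucc = ∑ i ∈ σ, w i * (p i) ^ (k.1+1) := by
    rw [hcoord]; simp
  have hB : x k.succ = ∑ i ∈ σ, w i * (p i) ^ (k.1+2) := by
    rw [hcoord]; simp [Fin.val_succ]
  set A := ∑ i ∈ σ, w i * (p i) ^ (k.1+1) with hAd
  set B := ∑ i ∈ σ, w i * (p i) ^ (k.1+2) with hBd
  have hRHS : (∑ i ∈ σ, (w i * (N - p i) / (N - C)) • momentCurve D (p i)) k
      = (N * A - B) / (N - C) := by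
    rw [Finset.sum_apply]
    have : ∀ i ∈ σ, ((w i * (N - p i) / (N - C)) • momentCurve D (p i)) k
        = (w i * (N * (p i)^(k.1+1) - (p i)^(k.1+2))) / (N - C) := by
      intro i _
      simp only [Pi.smul_apply, smul_eq_mul, momentCurve_apply]
      ring
    rw [Finset.sum_congr rfl this, ← Finset.sum_div]
    congr 1
    rw [hAd, hBd, Finset.mul_sum, ← Finset.sum_sub_distrib]
    refine Finset.sum_congr rfl fun i _ => ?_
    ring
  rw [hRHS]
  simp only [NELphi, NELpi, hx0, hA, hB, ← hAd, ← hBd, Fin.coe_castSucc, Fin.val_succ]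
  field_simp
  ring
end Transfer

section Transfer2
variable {D : ℕ} {ι : Type} [DecidableEq ι]

lemma injOn_up {d : ℕ} {p : ι → ℝ} {σ : Finset ι} (hd : 0 < d) (hpinj : Set.InjOn p ↑σ) :
    Set.InjOn (fun i => momentCurve d (p i)) ↑σ :=
  fun a ha b hb hab => hpinj ha hb (momentCurve_injective d hd hab)

lemma NELphi_mem_hull {N : ℝ} (hN : N ≠ 0) {p : ι → ℝ} {σ : Finset ι}
    (hp : ∀ i ∈ σ, p i < N) (hpinj : Set.InjOn p ↑σ) {x : Fin (D+1) → ℝ}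
    (hx : x ∈ convexHull ℝ ((fun i => momentCurve (D+1) (p i)) '' ↑σ)) :
    NELphi D N x ∈ convexHull ℝ ((fun i => momentCurve D (p i)) '' ↑σ) := by
  obtain ⟨w, h0, h1, hxw⟩ := rep_of_mem_hull (injOn_up (Nat.succ_pos D) hpinj) hx
  rw [← hxw, NELphi_rep_eq hN hp h0 h1]
  have hCN : ∑ j ∈ σ, w j * p j < N := sum_wp_lt hp h0 h1
  have hCpos : 0 < N - ∑ j ∈ σ, w j * p j := by linarith
  refine mem_hull_of_rep _ σ _ (fun i hi => ?_) ?_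
  · have : 0 ≤ w i * (N - p i) :=
      mul_nonneg (h0 i hi) (by linarith [hp i hi])
    positivity
  · rw [← Finset.sum_div]
    rw [show ∑ i ∈ σ, w i * (N - p i) = N * (∑ i ∈ σ, w i) - ∑ j ∈ σ, w j * p j by
      rw [Finset.mul_sum, ← Finset.sum_sub_distrib]
      exact Finset.sum_congr rfl fun i _ => by ring]
    rw [h1, mul_one]
    exact div_self (ne_of_gt hCpos)

lemma NELphi_surj {N : ℝ} (hNpos : 0 < N) (hD : 0 < D) {p : ι → ℝ} {σ : Finset ι}
    (hp : ∀ i ∈ σ, p i < N) (hpinj : Set.InjOn p ↑σ) {q : Fin D → ℝ}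
    (hq : q ∈ convexHull ℝ ((fun i => momentCurve D (p i)) '' ↑σ)) :
    ∃ x ∈ convexHull ℝ ((fun i => momentCurve (D+1) (p i)) '' ↑σ), NELphi D N x = q := by
  have hN : N ≠ 0 := ne_of_gt hNpos
  obtain ⟨u, hu0, hu1, huq⟩ := rep_of_mem_hull (injOn_up hD hpinj) hq
  have hNp : ∀ i ∈ σ, 0 < N - p i := fun i hi => by linarith [hp i hi]
  set S := ∑ j ∈ σ, u j / (N - p j) with hS
  have hSpos : 0 < S := by
    obtain ⟨i₀, hi₀, hui₀⟩ : ∃ i ∈ σ, 0 < u i := by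
      by_contra hcon
      push_neg at hcon
      have : ∑ i ∈ σ, u i = 0 :=
        Finset.sum_eq_zero fun i hi => le_antisymm (hcon i hi) (hu0 i hi)
      rw [hu1] at this; norm_num at this
    refine Finset.sum_pos' (fun i hi => ?_) ⟨i₀, hi₀, ?_⟩
    · exact div_nonneg (hu0 i hi) (le_of_lt (hNp i hi))
    · exact div_pos hui₀ (hNp i₀ hi₀)
  set w : ι → ℝ := fun i => (u i / (N - p i)) / S with hw
  have hw0 : ∀ i ∈ σ, 0 ≤ w i := fun i hi =>
    div_nonneg (div_nonneg (hu0 i hi) (le_of_lt (hNp i hi))) (le_of_lt hSpos)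
  have hw1 : ∑ i ∈ σ, w i = 1 := by
    rw [hw, ← Finset.sum_div, ← hS]
    exact div_self (ne_of_gt hSpos)
  refine ⟨∑ i ∈ σ, w i • momentCurve (D+1) (p i), mem_hull_of_rep _ σ _ hw0 hw1, ?_⟩
  rw [NELphi_rep_eq hN hp hw0 hw1]
  have hNC : N - ∑ j ∈ σ, w j * p j = 1 / S := by
    have h1' : ∑ i ∈ σ, w i * (N - p i) = N * (∑ i ∈ σ, w i) - ∑ j ∈ σ, w j * p j := by
      rw [Finset.mul_sum, ← Finset.sum_sub_distrib]
      exact Finset.sum_congr rfl fun i _ => by ring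
    have h2' : ∑ i ∈ σ, w i * (N - p i) = (∑ i ∈ σ, u i) / S := by
      rw [Finset.sum_div]
      refine Finset.sum_congr rfl fun i hi => ?_
      have hp0 : N - p i ≠ 0 := ne_of_gt (hNp i hi)
      rw [hw]
      calc u i / (N - p i) / S * (N - p i) = (u i / S) * ((N - p i)/(N - p i)) := by ring
        _ = u i / S := by rw [div_self hp0, mul_one]
    rw [hw1, mul_one] at h1'
    rw [hu1] at h2'
    linarith
  rw [← huq]
  refine Finset.sum_congr rfl fun i hi => ?_
  congr 1
  rw [hNC, hw]
  have := ne_of_gt (hNp i hi)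
  field_simp

lemma pi_injOn_hull {N : ℝ} (hNpos : 0 < N) {p : ι → ℝ} {σ : Finset ι}
    (hcard : σ.card ≤ D + 1) (hp : ∀ i ∈ σ, p i < N) (hpinj : Set.InjOn p ↑σ)
    {x y : Fin (D+1) → ℝ}
    (hx : x ∈ convexHull ℝ ((fun i => momentCurve (D+1) (p i)) '' ↑σ))
    (hy : y ∈ convexHull ℝ ((fun i => momentCurve (D+1) (p i)) '' ↑σ))
    (hpi : NELpi D N x = NELpi D N y) : x = y := by
  have hN : N ≠ 0 := ne_of_gt hNpos
  have hx0 : x 0 < N := hull_coord0_lt hp hx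
  have hy0 : y 0 < N := hull_coord0_lt hp hy
  have hxne : N - x 0 ≠ 0 := sub_ne_zero.mpr (ne_of_gt hx0)
  have hyne : N - y 0 ≠ 0 := sub_ne_zero.mpr (ne_of_gt hy0)
  set dx := (N - x 0)/N with hdx
  set dy := (N - y 0)/N with hdy
  set v := momentCurve (D+1) N with hv
  have hxv : x = v + dx • (NELpi D N x - v) := NELpi_inv hxne hN
  have hyv : y = v + dy • (NELpi D N x - v) := by
    rw [hpi]; exact NELpi_inv hyne hN
  by_cases hdd : dx = dy
  · rw [hxv, hyv, hdd]
  · -- v is an affine combination of x and y, contradiction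
    have hvcomb : v = (1 - dx/(dx - dy)) • x + (dx/(dx - dy)) • y := by
      rw [hxv, hyv]
      have hne : dx - dy ≠ 0 := sub_ne_zero.mpr hdd
      funext j
      simp only [Pi.add_apply, Pi.smul_apply, Pi.sub_apply, smul_eq_mul]
      field_simp
      ring
    obtain ⟨α, hα0, hα1, hαx⟩ := rep_of_mem_hull (injOn_up (Nat.succ_pos D) hpinj) hx
    obtain ⟨β, hβ0, hβ1, hβy⟩ := rep_of_mem_hull (injOn_up (Nat.succ_pos D) hpinj) hy
    set e := dx/(dx - dy) with he
    have hsum : ∑ i ∈ σ, ((1-e) * α i + e * β i) • momentCurve (D+1) (p i) = v := by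
      rw [show (fun i => ((1-e) * α i + e * β i) • momentCurve (D+1) (p i))
          = fun i => (1-e) • (α i • momentCurve (D+1) (p i))
            + e • (β i • momentCurve (D+1) (p i)) from ?_]
      · rw [Finset.sum_add_distrib, ← Finset.smul_sum, ← Finset.smul_sum, hαx, hβy]
        exact hvcomb.symm
      · funext i
        rw [add_smul, smul_smul, smul_smul]
    have hasum : ∑ i ∈ σ, ((1-e) * α i + e * β i) = 1 := by
      rw [Finset.sum_add_distrib, ← Finset.mul_sum, ← Finset.mul_sum, hα1, hβ1]
      ring
    exact absurd hsum (by
      intro hcon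
      exact no_affine_relation σ p N hcard (fun i hi => ne_of_lt (hp i hi)) _ hasum hcon)

/-- Cone collapse: `NELphi` maps the cone over a lifted simplex (minus the apex)
into the downstairs simplex. -/
lemma phi_cone_mem {N : ℝ} (hNpos : 0 < N) {p : ι → ℝ} {σ : Finset ι}
    (hp : ∀ i ∈ σ, p i < N) (hpinj : Set.InjOn p ↑σ) {x : Fin (D+1) → ℝ}
    (hx : x ∈ convexHull ℝ (insert (momentCurve (D+1) N)
      ((fun i => momentCurve (D+1) (p i)) '' ↑σ)))
    (hxv : x ≠ momentCurve (D+1) N) :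
    NELphi D N x ∈ convexHull ℝ ((fun i => momentCurve D (p i)) '' ↑σ) := by
  have hN : N ≠ 0 := ne_of_gt hNpos
  rcases σ.eq_empty_or_nonempty with hσ | hσ
  · exfalso
    apply hxv
    rw [hσ] at hx
    simpa [convexHull_singleton] using hx
  · have hne : ((fun i => momentCurve (D+1) (p i)) '' ↑σ).Nonempty :=
      (Set.image_nonempty).mpr (Finset.coe_nonempty.mpr hσ)
    rw [convexHull_insert hne, mem_convexJoin] at hx
    obtain ⟨a, ha, b, hb, hseg⟩ := hx
    rw [Set.mem_singleton_iff] at ha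
    subst ha
    rw [segment_eq_image] at hseg
    obtain ⟨θ, hθ, hxθ⟩ := hseg
    have hb0 : b 0 < N := hull_coord0_lt hp hb
    by_cases hθ0 : θ = 0
    · exfalso; apply hxv; rw [← hxθ, hθ0]; simp
    · have hpieq : NELpi D N x = NELpi D N b := by
        rw [← hxθ]
        exact NELpi_combo (ne_of_lt hb0) hN (by ring) hθ0
      have : NELphi D N x = NELphi D N b := by
        funext i; simp only [NELphi, hpieq]
      rw [this]
      exact NELphi_mem_hull hN hp hpinj hb
end Transfer2

section Cones
variable {n : ℕ}

/-- The cone over a simplex with the new apex `Fin.last n`. -/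
def NELcone (n : ℕ) (σ : Finset (Fin n)) : Finset (Fin (n+1)) :=
  insert (Fin.last n) (σ.image Fin.castSucc)

/-- The base of a simplex containing the apex. -/
def NELtoB (n : ℕ) (ρ : Finset (Fin (n+1))) : Finset (Fin n) :=
  Finset.univ.filter (fun i => i.castSucc ∈ ρ)

lemma last_not_mem_image (σ : Finset (Fin n)) : Fin.last n ∉ σ.image Fin.castSucc := by
  intro hmem
  obtain ⟨j, _, hj⟩ := Finset.mem_image.mp hmem
  exact absurd hj (ne_of_lt (Fin.castSucc_lt_last j))

lemma NELcone_card (σ : Finset (Fin n)) : (NELcone n σ).card = σ.card + 1 := by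
  rw [NELcone, Finset.card_insert_of_notMem (last_not_mem_image σ),
    Finset.card_image_of_injective _ (Fin.castSucc_injective n)]

lemma NELtoB_cone (σ : Finset (Fin n)) : NELtoB n (NELcone n σ) = σ := by
  ext i
  simp only [NELtoB, NELcone, Finset.mem_filter, Finset.mem_univ, true_and,
    Finset.mem_insert, Finset.mem_image]
  constructor
  · rintro (h | ⟨j, hj, hji⟩)
    · exact absurd h (ne_of_lt (Fin.castSucc_lt_last i))
    · rwa [← Fin.castSucc_injective n hji]
  · intro hi
    exact Or.inr ⟨i, hi, rfl⟩

lemma NELcone_toB {ρ : Finset (Fin (n+1))} (h : Fin.last n ∈ ρ) :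
    NELcone n (NELtoB n ρ) = ρ := by
  ext j
  simp only [NELcone, NELtoB, Finset.mem_insert, Finset.mem_image, Finset.mem_filter,
    Finset.mem_univ, true_and]
  constructor
  · rintro (rfl | ⟨i, hi, rfl⟩)
    · exact h
    · exact hi
  · intro hj
    rcases eq_or_ne j (Fin.last n) with rfl | hne
    · exact Or.inl rfl
    · obtain ⟨i, rfl⟩ := Fin.exists_castSucc_eq.mpr hne
      exact Or.inr ⟨i, hj, rfl⟩

lemma NELcone_inter (σ τ : Finset (Fin n)) :
    NELcone n σ ∩ NELcone n τ = NELcone n (σ ∩ τ) := by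
  simp only [NELcone]
  rw [Finset.image_inter _ _ (Fin.castSucc_injective n)]
  ext j
  simp only [Finset.mem_inter, Finset.mem_insert]
  tauto

lemma snoc_strictMono {t : Fin n → ℝ} {N : ℝ} (ht : StrictMono t)
    (hN : ∀ i, t i < N) : StrictMono (Fin.snoc t N : Fin (n+1) → ℝ) := by
  rw [Fin.strictMono_iff_lt_succ]
  intro i
  rw [Fin.snoc_castSucc]
  rcases eq_or_ne i.succ (Fin.last n) with h | h
  · rw [h, Fin.snoc_last]; exact hN i
  · obtain ⟨j, hj⟩ := Fin.exists_castSucc_eq.mpr h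
    rw [← hj, Fin.snoc_castSucc]
    apply ht
    have hco : (j.castSucc : ℕ) = (i.succ : ℕ) := by rw [hj]
    rw [Fin.coe_castSucc, Fin.val_succ] at hco
    exact Fin.lt_def.mpr (by omega)

end Cones
/-- Splitting a point of a cone hull into apex and base parts. -/
lemma cone_split (D : ℕ) {n : ℕ} (t : Fin n → ℝ) (N : ℝ) {ς : Finset (Fin n)}
    (hςne : ς.Nonempty) {x : Fin (D+1) → ℝ}
    (hx : x ∈ convexHull ℝ (insert (momentCurve (D+1) N)
      ((fun i : Fin n => momentCurve (D+1) (t i)) '' ↑ς)))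
    (hxv : x ≠ momentCurve (D+1) N) :
    ∃ θ : ℝ, 0 ≤ θ ∧ θ ≤ 1 ∧ θ ≠ 0 ∧
      ∃ w ∈ convexHull ℝ ((fun i : Fin n => momentCurve (D+1) (t i)) '' ↑ς),
        (1-θ) • momentCurve (D+1) N + θ • w = x := by
  have hne : ((fun i : Fin n => momentCurve (D+1) (t i)) '' ↑ς).Nonempty :=
    (Set.image_nonempty).mpr (Finset.coe_nonempty.mpr hςne)
  rw [convexHull_insert hne, mem_convexJoin] at hx
  obtain ⟨a, ha, w, hw, hseg⟩ := hx
  rw [Set.mem_singleton_iff] at ha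
  subst ha
  rw [segment_eq_image] at hseg
  obtain ⟨θ, hθmem, hxθ⟩ := hseg
  refine ⟨θ, hθmem.1, hθmem.2, ?_, w, hw, hxθ⟩
  intro h0
  apply hxv
  rw [← hxθ, h0]
  simp

/-- **Proposition (lifting a non-extendable example one dimension up).** If there is a
collection `F` of pairwise non-overlapping `D`-simplices on `γ_D` whose vertex sets cover
exactly an `n`-point set and which is non-extendable, then there is a collection `F'` of
pairwise non-overlapping `(D+1)`-simplices on `γ_{D+1}` whose vertex sets cover exactly
an `(n+1)`-point set and which is non-extendable. -/
theorem non_extendable_lifts_one_dimension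
    (D n : ℕ) (hD : 2 ≤ D)
    (t : Fin n → ℝ) (ht : StrictMono t)
    (F : Finset (Finset (Fin n)))
    (hFcard : ∀ σ ∈ F, σ.card = D + 1)
    (hFno : ∀ σ ∈ F, ∀ τ ∈ F, σ ≠ τ → ¬ Overlap D t σ τ)
    (hFcov : ∀ i : Fin n, ∃ σ ∈ F, i ∈ σ)
    (hFnext : ¬ ∃ T : Finset (Finset (Fin n)),
        IsTriangulation D t Finset.univ T ∧ UsesAllVertices Finset.univ T ∧
        ∀ σ ∈ F, IsFaceOf σ T) :
    ∃ t' : Fin (n + 1) → ℝ, StrictMono t' ∧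
      ∃ F' : Finset (Finset (Fin (n + 1))),
        (∀ σ ∈ F', σ.card = D + 2) ∧
        (∀ σ ∈ F', ∀ τ ∈ F', σ ≠ τ → ¬ Overlap (D + 1) t' σ τ) ∧
        (∀ i : Fin (n + 1), ∃ σ ∈ F', i ∈ σ) ∧
        ¬ ∃ T : Finset (Finset (Fin (n + 1))),
            IsTriangulation (D + 1) t' Finset.univ T ∧
            UsesAllVertices Finset.univ T ∧
            ∀ σ ∈ F', IsFaceOf σ T := by
  classical
  cases n with
  | zero =>
    exfalso
    apply hFnext
    refine ⟨∅, ⟨?_, ?_, ?_⟩, ?_, ?_⟩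
    · intro σ hσ; exact absurd hσ (Finset.notMem_empty σ)
    · intro σ hσ; exact absurd hσ (Finset.notMem_empty σ)
    · intro p hp
      exfalso
      have hempty : mcConv D t (Finset.univ : Finset (Fin 0)) = ∅ := by
        rw [mcConv, Finset.univ_eq_empty, Finset.coe_empty, Set.image_empty, convexHull_empty]
      rw [hempty] at hp
      exact absurd hp (Set.notMem_empty p)
    · intro a _; exact a.elim0
    · intro σ hσ
      exfalso
      have h1 := hFcard σ hσ
      have h2 : σ.card ≤ 0 := by
        have := Finset.card_le_univ σ
        simpa using this
      omega
  | succ m =>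
    have h0D : (0:ℕ) < D := by omega
    -- the new parameter value
    set tmax := t (Fin.last m) with htmaxdef
    set N := max (tmax + 1) 1 with hNdef
    have hNpos : (0:ℝ) < N := lt_of_lt_of_le one_pos (le_max_right _ _)
    have hNne : N ≠ 0 := ne_of_gt hNpos
    have htN : ∀ i : Fin (m+1), t i < N := fun i =>
      lt_of_le_of_lt (ht.monotone (Fin.le_last i))
        (lt_of_lt_of_le (lt_add_one tmax) (le_max_left _ _))
    have htmaxN : tmax < N := htN _
    set t' : Fin (m+2) → ℝ := Fin.snoc t N with ht'def
    have ht' : StrictMono t' := snoc_strictMono ht htN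
    have ht'cs : ∀ i : Fin (m+1), t' i.castSucc = t i := fun i => Fin.snoc_castSucc _ _ i
    have ht'last : t' (Fin.last (m+1)) = N := Fin.snoc_last _ _
    have ht'lt : ∀ i : Fin (m+2), i ≠ Fin.last (m+1) → t' i ≤ tmax := by
      intro i hi
      obtain ⟨j, rfl⟩ := Fin.exists_castSucc_eq.mpr hi
      rw [ht'cs j]
      exact ht.monotone (Fin.le_last j)
    have htinj : ∀ s : Set (Fin (m+1)), Set.InjOn t s := fun s => ht.injective.injOn
    -- image rewriting
    have himg : ∀ ς : Finset (Fin (m+1)),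
        (fun i : Fin (m+2) => momentCurve (D+1) (t' i)) '' ↑(ς.image Fin.castSucc)
          = (fun i : Fin (m+1) => momentCurve (D+1) (t i)) '' ↑ς := by
      intro ς
      rw [Finset.coe_image, Set.image_image]
      exact Set.image_congr fun i _ => by rw [ht'cs i]
    have hconeimg : ∀ ς : Finset (Fin (m+1)),
        mcConv (D+1) t' (NELcone (m+1) ς)
          = convexHull ℝ (insert (momentCurve (D+1) N)
              ((fun i : Fin (m+1) => momentCurve (D+1) (t i)) '' ↑ς)) := by
      intro ς
      show convexHull ℝ _ = _
      congr 1
      rw [NELcone, Finset.coe_insert, Set.image_insert_eq, ht'last, himg ς]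
    have hv0 : momentCurve (D+1) N 0 = N := momentCurve_zero_apply D N
    -- the cone family
    refine ⟨t', ht', F.image (fun σ => NELcone (m+1) σ), ?_, ?_, ?_, ?_⟩
    · -- cardinalities
      intro σ' hσ'
      obtain ⟨σ, hσF, rfl⟩ := Finset.mem_image.mp hσ'
      rw [NELcone_card, hFcard σ hσF]
    · -- pairwise non-overlap of the cones
      intro σ' hσ' τ' hτ' hne
      obtain ⟨σ, hσF, rfl⟩ := Finset.mem_image.mp hσ'
      obtain ⟨τ, hτF, rfl⟩ := Finset.mem_image.mp hτ'
      have hστ : σ ≠ τ := fun h => hne (by rw [h])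
      intro hov
      apply hov
      rintro x ⟨hx1, hx2⟩
      rw [NELcone_inter]
      rw [hconeimg] at hx1 hx2 ⊢
      by_cases hxv : x = momentCurve (D+1) N
      · subst hxv
        exact subset_convexHull ℝ _ (Set.mem_insert _ _)
      · have hσne : σ.Nonempty := Finset.card_pos.mp (by rw [hFcard σ hσF]; omega)
        have hτne : τ.Nonempty := Finset.card_pos.mp (by rw [hFcard τ hτF]; omega)
        obtain ⟨θ₁, hθ₁0, hθ₁1, hθ₁ne, w₁, hw₁, hxw₁⟩ := cone_split D t N hσne hx1 hxv
        obtain ⟨θ₂, hθ₂0, hθ₂1, hθ₂ne, w₂, hw₂, hxw₂⟩ := cone_split D t N hτne hx2 hxv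
        have hw₁0 : w₁ 0 < N := hull_coord0_lt (fun i hi => htN i) hw₁
        have hw₂0 : w₂ 0 < N := hull_coord0_lt (fun i hi => htN i) hw₂
        have hpi1 : NELpi D N x = NELpi D N w₁ := by
          rw [← hxw₁]; exact NELpi_combo (ne_of_lt hw₁0) hNne (by ring) hθ₁ne
        have hpi2 : NELpi D N x = NELpi D N w₂ := by
          rw [← hxw₂]; exact NELpi_combo (ne_of_lt hw₂0) hNne (by ring) hθ₂ne
        have hpi12 : NELpi D N w₁ = NELpi D N w₂ := by rw [← hpi1, hpi2]
        have hphi12 : NELphi D N w₁ = NELphi D N w₂ := by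
          funext i; simp only [NELphi, hpi12]
        have hq1 : NELphi D N w₁ ∈ convexHull ℝ
            ((fun i : Fin (m+1) => momentCurve D (t i)) '' ↑σ) :=
          NELphi_mem_hull hNne (fun i _ => htN i) (htinj _) hw₁
        have hq2 : NELphi D N w₁ ∈ convexHull ℝ
            ((fun i : Fin (m+1) => momentCurve D (t i)) '' ↑τ) := by
          rw [hphi12]
          exact NELphi_mem_hull hNne (fun i _ => htN i) (htinj _) hw₂
        have hqint : NELphi D N w₁ ∈ mcConv D t (σ ∩ τ) :=
          not_not.mp (hFno σ hσF τ hτF hστ) ⟨hq1, hq2⟩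
        obtain ⟨w', hw', hphiw'⟩ := NELphi_surj hNpos h0D (fun i _ => htN i) (htinj _) hqint
        have hw'σ : w' ∈ convexHull ℝ
            ((fun i : Fin (m+1) => momentCurve (D+1) (t i)) '' ↑σ) := by
          refine convexHull_mono (Set.image_mono ?_) hw'
          exact Finset.coe_subset.mpr Finset.inter_subset_left
        have hw'0 : w' 0 < N := hull_coord0_lt (fun i _ => htN i) hw'σ
        have hpiw' : NELpi D N w' = NELpi D N w₁ := by
          apply NELpi_eq_of_phi_eq (sub_ne_zero.mpr (ne_of_gt hw'0))
            (sub_ne_zero.mpr (ne_of_gt hw₁0)) hNne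
          exact hphiw'
        have hw1eq : w₁ = w' := by
          apply pi_injOn_hull hNpos (by rw [hFcard σ hσF]) (fun i _ => htN i) (htinj _)
            hw₁ hw'σ
          exact hpiw'.symm
        -- conclude
        have hvmem : momentCurve (D+1) N ∈ convexHull ℝ (insert (momentCurve (D+1) N)
            ((fun i : Fin (m+1) => momentCurve (D+1) (t i)) '' ↑(σ ∩ τ))) :=
          subset_convexHull ℝ _ (Set.mem_insert _ _)
        have hwmem : w₁ ∈ convexHull ℝ (insert (momentCurve (D+1) N)
            ((fun i : Fin (m+1) => momentCurve (D+1) (t i)) '' ↑(σ ∩ τ))) := by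
          rw [hw1eq]
          exact convexHull_mono (Set.subset_insert _ _) hw'
        rw [← hxw₁]
        exact (convex_convexHull ℝ _) hvmem hwmem (by linarith) hθ₁0 (by ring)
    · -- the cones cover all indices
      intro i
      by_cases hi : i = Fin.last (m+1)
      · obtain ⟨σ, hσF, -⟩ := hFcov 0
        exact ⟨NELcone (m+1) σ, Finset.mem_image_of_mem _ hσF, by rw [hi]; exact Finset.mem_insert_self _ _⟩
      · obtain ⟨j, rfl⟩ := Fin.exists_castSucc_eq.mpr hi
        obtain ⟨σ, hσF, hjσ⟩ := hFcov j
        exact ⟨NELcone (m+1) σ, Finset.mem_image_of_mem _ hσF,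
          Finset.mem_insert_of_mem (Finset.mem_image_of_mem _ hjσ)⟩
    · -- non-extendability transfers
      rintro ⟨T', ⟨hT1, hT2, hT3⟩, hUse', hFace'⟩
      apply hFnext
      set Td := (T'.filter (fun ρ => Fin.last (m+1) ∈ ρ)).image (NELtoB (m+1)) with hTddef
      have hmemTd : ∀ B ∈ Td, NELcone (m+1) B ∈ T' ∧ B.card = D + 1 := by
        intro B hB
        obtain ⟨ρ, hρ, rfl⟩ := Finset.mem_image.mp hB
        obtain ⟨hρT, hρlast⟩ := Finset.mem_filter.mp hρ
        have hrec : NELcone (m+1) (NELtoB (m+1) ρ) = ρ := NELcone_toB hρlast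
        constructor
        · rw [hrec]; exact hρT
        · have hcount := NELcone_card (NELtoB (m+1) ρ)
          rw [hrec] at hcount
          have := (hT1 ρ hρT).1
          omega
      -- covering of the link
      have hcover : ∀ p ∈ mcConv D t Finset.univ, ∃ B ∈ Td, p ∈ mcConv D t B := by
        intro p hp
        obtain ⟨xh, hxh, hphixh⟩ := NELphi_surj hNpos h0D
          (fun i _ => htN i) (htinj _) hp
        have hxh0le : xh 0 ≤ tmax :=
          hull_coord0_le (fun i _ => ht.monotone (Fin.le_last i)) hxh
        have hxh0lt : xh 0 < N := lt_of_le_of_lt hxh0le htmaxN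
        set c₀ := (tmax + N)/2 with hc₀
        have hc₀1 : tmax < c₀ := by rw [hc₀]; linarith
        have hc₀2 : c₀ < N := by rw [hc₀]; linarith
        set s := (c₀ - xh 0)/(N - xh 0) with hs
        have hden : (0:ℝ) < N - xh 0 := by linarith
        have hs0 : 0 ≤ s := div_nonneg (by linarith) (le_of_lt hden)
        have hs1 : s < 1 := (div_lt_one hden).mpr (by linarith)
        set xs := s • momentCurve (D+1) N + (1 - s) • xh with hxs
        have hxs0 : xs 0 = c₀ := by
          have hdenne : N - xh 0 ≠ 0 := ne_of_gt hden
          rw [hxs]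
          simp only [Pi.add_apply, Pi.smul_apply, smul_eq_mul, hv0]
          rw [hs]
          field_simp
          ring
        have hxsmem : xs ∈ mcConv (D+1) t' Finset.univ := by
          have hvmem : momentCurve (D+1) N ∈ mcConv (D+1) t' Finset.univ := by
            apply subset_convexHull ℝ _
            exact ⟨Fin.last (m+1), by simp, by simp only [ht'last]⟩
          have hxhmem : xh ∈ mcConv (D+1) t' Finset.univ := by
            refine convexHull_mono ?_ hxh
            rintro y ⟨i, -, rfl⟩
            exact ⟨i.castSucc, by simp, by simp only [ht'cs i]⟩
          exact (convex_convexHull ℝ _) hvmem hxhmem hs0 (by linarith) (by ring)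
        obtain ⟨ρ, hρT, hxsρ⟩ := hT3 xs hxsmem
        have hlast : Fin.last (m+1) ∈ ρ := by
          by_contra hno
          have hbound : xs 0 ≤ tmax :=
            hull_coord0_le (fun j hj => ht'lt j (fun h => hno (h ▸ hj))) hxsρ
          rw [hxs0] at hbound
          linarith
        have hxsv : xs ≠ momentCurve (D+1) N := by
          intro h
          rw [h, hv0] at hxs0
          linarith
        have hxsρ' : xs ∈ convexHull ℝ (insert (momentCurve (D+1) N)
            ((fun i : Fin (m+1) => momentCurve (D+1) (t i)) '' ↑(NELtoB (m+1) ρ))) := by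
          rw [← hconeimg, NELcone_toB hlast]
          exact hxsρ
        have hphimem := phi_cone_mem hNpos (fun i _ => htN i) (htinj _) hxsρ' hxsv
        have hphixs : NELphi D N xs = p := by
          have hpieq : NELpi D N xs = NELpi D N xh := by
            rw [hxs]
            exact NELpi_combo (ne_of_lt hxh0lt) hNne (by ring) (by linarith)
          rw [← hphixh]
          funext i; simp only [NELphi, hpieq]
        refine ⟨NELtoB (m+1) ρ, Finset.mem_image_of_mem _
          (Finset.mem_filter.mpr ⟨hρT, hlast⟩), ?_⟩
        rw [← hphixs]
        exact hphimem
      refine ⟨Td, ⟨?_, ?_, hcover⟩, ?_, ?_⟩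
      · -- cardinalities
        intro B hB
        exact ⟨(hmemTd B hB).2, Finset.subset_univ B⟩
      · -- pairwise non-overlap of the link
        intro B₁ hB₁ B₂ hB₂ hne
        have hc₁ := hmemTd B₁ hB₁
        have hc₂ := hmemTd B₂ hB₂
        have hρne : NELcone (m+1) B₁ ≠ NELcone (m+1) B₂ := by
          intro h
          apply hne
          rw [← NELtoB_cone B₁, ← NELtoB_cone B₂, h]
        have hnov := hT2 _ hc₁.1 _ hc₂.1 hρne
        intro hov
        apply hov
        rintro q ⟨hq1, hq2⟩
        -- lift q to both simplices
        obtain ⟨x₁, hx₁, hphix₁⟩ := NELphi_surj hNpos h0D (fun i _ => htN i) (htinj _) hq1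
        obtain ⟨x₂, hx₂, hphix₂⟩ := NELphi_surj hNpos h0D (fun i _ => htN i) (htinj _) hq2
        have hx₁0 : x₁ 0 < N := hull_coord0_lt (fun i _ => htN i) hx₁
        have hx₂0 : x₂ 0 < N := hull_coord0_lt (fun i _ => htN i) hx₂
        have hpix : NELpi D N x₁ = NELpi D N x₂ := by
          apply NELpi_eq_of_phi_eq (sub_ne_zero.mpr (ne_of_gt hx₁0))
            (sub_ne_zero.mpr (ne_of_gt hx₂0)) hNne
          rw [hphix₁, hphix₂]
        have key : ∀ (C₁ C₂ : Finset (Fin (m+1))) (y₁ y₂ : Fin (D+1) → ℝ),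
            NELcone (m+1) C₁ ∈ T' → NELcone (m+1) C₂ ∈ T' →
            NELcone (m+1) C₁ ≠ NELcone (m+1) C₂ →
            y₁ ∈ convexHull ℝ ((fun i : Fin (m+1) => momentCurve (D+1) (t i)) '' ↑C₁) →
            y₂ ∈ convexHull ℝ ((fun i : Fin (m+1) => momentCurve (D+1) (t i)) '' ↑C₂) →
            NELpi D N y₁ = NELpi D N y₂ →
            (N - y₁ 0)/N ≤ (N - y₂ 0)/N →
            NELphi D N y₁ ∈ mcConv D t (C₁ ∩ C₂) := by
          intro C₁ C₂ y₁ y₂ hC₁T hC₂T hCne hy₁ hy₂ hpieq hd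
          have hy₁0 : y₁ 0 < N := hull_coord0_lt (fun i _ => htN i) hy₁
          have hy₂0 : y₂ 0 < N := hull_coord0_lt (fun i _ => htN i) hy₂
          set d₁ := (N - y₁ 0)/N with hd₁
          set d₂ := (N - y₂ 0)/N with hd₂
          have hd₁pos : 0 < d₁ := div_pos (by linarith) hNpos
          have hd₂pos : 0 < d₂ := div_pos (by linarith) hNpos
          set c := d₁ / d₂ with hc
          have hcpos : 0 < c := div_pos hd₁pos hd₂pos
          have hc1 : c ≤ 1 := (div_le_one hd₂pos).mpr hd
          have hy₁v : y₁ = momentCurve (D+1) N + d₁ • (NELpi D N y₁ - momentCurve (D+1) N) :=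
            NELpi_inv (sub_ne_zero.mpr (ne_of_gt hy₁0)) hNne
          have hy₂v : y₂ = momentCurve (D+1) N + d₂ • (NELpi D N y₁ - momentCurve (D+1) N) := by
            rw [hpieq]
            exact NELpi_inv (sub_ne_zero.mpr (ne_of_gt hy₂0)) hNne
          have hcombo : y₁ = (1 - c) • momentCurve (D+1) N + c • y₂ := by
            rw [hy₁v, hy₂v]
            funext j
            simp only [Pi.add_apply, Pi.smul_apply, Pi.sub_apply, smul_eq_mul]
            have hd₂ne : d₂ ≠ 0 := ne_of_gt hd₂pos
            rw [hc]
            field_simp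
            ring
          have hy₁mem2 : y₁ ∈ mcConv (D+1) t' (NELcone (m+1) C₂) := by
            rw [hconeimg]
            have hvmem : momentCurve (D+1) N ∈ convexHull ℝ (insert (momentCurve (D+1) N)
                ((fun i : Fin (m+1) => momentCurve (D+1) (t i)) '' ↑C₂)) :=
              subset_convexHull ℝ _ (Set.mem_insert _ _)
            have hy₂mem : y₂ ∈ convexHull ℝ (insert (momentCurve (D+1) N)
                ((fun i : Fin (m+1) => momentCurve (D+1) (t i)) '' ↑C₂)) :=
              convexHull_mono (Set.subset_insert _ _) hy₂
            rw [hcombo]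
            exact (convex_convexHull ℝ _) hvmem hy₂mem (by linarith) (le_of_lt hcpos) (by ring)
          have hy₁mem1 : y₁ ∈ mcConv (D+1) t' (NELcone (m+1) C₁) := by
            rw [hconeimg]
            exact convexHull_mono (Set.subset_insert _ _) hy₁
          have hy₁int : y₁ ∈ mcConv (D+1) t' (NELcone (m+1) C₁ ∩ NELcone (m+1) C₂) :=
            not_not.mp (hT2 _ hC₁T _ hC₂T hCne) ⟨hy₁mem1, hy₁mem2⟩
          rw [NELcone_inter] at hy₁int
          rw [hconeimg] at hy₁int
          have hy₁ne : y₁ ≠ momentCurve (D+1) N := by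
            intro h
            rw [h, hv0] at hy₁0
            linarith
          exact phi_cone_mem hNpos (fun i _ => htN i) (htinj _) hy₁int hy₁ne
        rcases le_total ((N - x₁ 0)/N) ((N - x₂ 0)/N) with hle | hle
        · have := key B₁ B₂ x₁ x₂ hc₁.1 hc₂.1 hρne hx₁ hx₂ hpix hle
          rw [← hphix₁]
          exact this
        · have := key B₂ B₁ x₂ x₁ hc₂.1 hc₁.1 (Ne.symm hρne) hx₂ hx₁ hpix.symm hle
          rw [Finset.inter_comm]
          rw [← hphix₂]
          exact this
      · -- all vertices used
        intro a _
        have hpa : momentCurve D (t a) ∈ mcConv D t Finset.univ :=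
          subset_convexHull ℝ _ ⟨a, by simp, rfl⟩
        obtain ⟨B, hB, hpB⟩ := hcover _ hpa
        refine ⟨B, hB, ?_⟩
        obtain ⟨u, hu0, hu1, husum⟩ := rep_of_mem_hull (injOn_up h0D (htinj _)) hpB
        by_contra haB
        have hcoordk : ∀ k : Fin D, ∑ j ∈ B, u j * (t j)^(k.1+1) = (t a)^(k.1+1) := by
          intro k
          have := congrFun husum k
          simpa [momentCurve, Finset.sum_apply] using this
        have h0' : ∑ j ∈ B, u j * t j = t a := by
          have := hcoordk ⟨0, h0D⟩
          simpa using this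
        have h1' : ∑ j ∈ B, u j * (t j)^2 = (t a)^2 := by
          have := hcoordk ⟨1, by omega⟩
          simpa using this
        have hzero : ∑ j ∈ B, u j * (t j - t a)^2 = 0 := by
          have hexp : ∑ j ∈ B, u j * (t j - t a)^2
              = (∑ j ∈ B, u j * (t j)^2) - 2 * (t a) * (∑ j ∈ B, u j * t j)
                + (t a)^2 * (∑ j ∈ B, u j) := by
            rw [Finset.mul_sum, Finset.mul_sum, ← Finset.sum_sub_distrib,
              ← Finset.sum_add_distrib]
            exact Finset.sum_congr rfl fun j _ => by ring
          rw [hexp, h0', h1', hu1]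
          ring
        have hallzero := (Finset.sum_eq_zero_iff_of_nonneg
          (fun j hj => mul_nonneg (hu0 j hj) (sq_nonneg _))).mp hzero
        have huzero : ∀ j ∈ B, u j = 0 := by
          intro j hj
          have hne : t j - t a ≠ 0 := by
            intro h
            have : t j = t a := by linarith
            exact haB (ht.injective this ▸ hj)
          have := hallzero j hj
          have hsq : (t j - t a)^2 ≠ 0 := pow_ne_zero 2 hne
          exact (mul_eq_zero.mp this).resolve_right hsq
        rw [Finset.sum_eq_zero huzero] at hu1
        norm_num at hu1
      · -- faces
        intro σ hσF
        obtain ⟨ρ', hρ'T, hsub⟩ := hFace' (NELcone (m+1) σ) (Finset.mem_image_of_mem _ hσF)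
        have heq : NELcone (m+1) σ = ρ' := by
          apply Finset.eq_of_subset_of_card_le hsub
          rw [(hT1 ρ' hρ'T).1, NELcone_card, hFcard σ hσF]
        refine ⟨σ, ?_, Finset.Subset.refl σ⟩
        rw [hTddef]
        refine Finset.mem_image.mpr ⟨NELcone (m+1) σ, Finset.mem_filter.mpr
          ⟨by rw [heq]; exact hρ'T, Finset.mem_insert_self _ _⟩, NELtoB_cone σ⟩
end

section
/- Let D ≥ 2 and let F be a finite collection of pairwise non-overlapping simplices on the moment curve γ_D in ℝ^D whose vertices lie in a set A ⊆ γ_D with D+1 ≤ |A| ≤ D+2. Then F can be extended to a triangulation of conv(A) with vertex set A; that is, there exists a triangulation T of conv(A) without new vertices such that every member of F is a face of T. -/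
open Finset

section AuxExtFew

open Polynomial

noncomputable def cf {n : ℕ} (t : Fin n → ℝ) (i : Fin n) : ℝ :=
  (∏ j ∈ Finset.univ.erase i, (t i - t j))⁻¹

noncomputable def qpoly {n : ℕ} (t : Fin n → ℝ) (i : Fin n) : ℝ[X] :=
  ∏ j ∈ Finset.univ.erase i, (X - C (t j))

lemma prod_diff_ne_zero {n : ℕ} {t : Fin n → ℝ} (ht : Function.Injective t) (i : Fin n) :
    ∏ j ∈ Finset.univ.erase i, (t i - t j) ≠ 0 := by
  rw [Finset.prod_ne_zero_iff]
  intro j hj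
  have : j ≠ i := (Finset.mem_erase.mp hj).1
  exact sub_ne_zero.mpr fun h => this (ht h.symm)

lemma cf_ne_zero {n : ℕ} {t : Fin n → ℝ} (ht : Function.Injective t) (i : Fin n) :
    cf t i ≠ 0 := inv_ne_zero (prod_diff_ne_zero ht i)

lemma qpoly_monic {n : ℕ} (t : Fin n → ℝ) (i : Fin n) : (qpoly t i).Monic :=
  monic_prod_of_monic _ _ fun j _ => monic_X_sub_C (t j)

lemma qpoly_natDegree {n : ℕ} (t : Fin n → ℝ) (i : Fin n) :
    (qpoly t i).natDegree = n - 1 := by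
  rw [qpoly, natDegree_prod _ _ (fun j _ => X_sub_C_ne_zero (t j))]
  simp [natDegree_X_sub_C, Finset.card_erase_of_mem]

lemma qpoly_coeff {n : ℕ} (t : Fin n → ℝ) (i : Fin n) :
    (qpoly t i).coeff (n - 1) = 1 := by
  have h := (qpoly_monic t i).coeff_natDegree
  rwa [qpoly_natDegree] at h

lemma qpoly_eval_self {n : ℕ} (t : Fin n → ℝ) (i : Fin n) :
    (qpoly t i).eval (t i) = ∏ j ∈ Finset.univ.erase i, (t i - t j) := by
  simp [qpoly, eval_prod]

lemma qpoly_eval_ne {n : ℕ} (t : Fin n → ℝ) (i k : Fin n) (hk : k ≠ i) :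
    (qpoly t i).eval (t k) = 0 := by
  rw [qpoly, eval_prod]
  exact Finset.prod_eq_zero (Finset.mem_erase.mpr ⟨hk, Finset.mem_univ k⟩) (by simp)

/-- Representation: any "dependence" is a multiple of `cf`. -/
lemma rep {n : ℕ} {t : Fin n → ℝ} (ht : Function.Injective t) (hn : 2 ≤ n)
    (d : Fin n → ℝ) (hd : ∀ m, m ≤ n - 2 → ∑ i, d i * t i ^ m = 0) (i : Fin n) :
    d i = (∑ k, d k * t k ^ (n - 1)) * cf t i := by
  have key : ∑ k, d k * (qpoly t i).eval (t k) = d i * ∏ j ∈ Finset.univ.erase i, (t i - t j) := by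
    rw [Fintype.sum_eq_single i]
    · rw [qpoly_eval_self]
    · intro k hk; rw [qpoly_eval_ne t i k hk, mul_zero]
  have key2 : ∑ k, d k * (qpoly t i).eval (t k) = ∑ k, d k * t k ^ (n - 1) := by
    have hdeg := qpoly_natDegree t i
    calc ∑ k, d k * (qpoly t i).eval (t k)
        = ∑ k, ∑ m ∈ Finset.range (n - 1 + 1), d k * ((qpoly t i).coeff m * t k ^ m) := by
          refine Finset.sum_congr rfl fun k _ => ?_
          rw [eval_eq_sum_range, hdeg, Finset.mul_sum]
      _ = ∑ m ∈ Finset.range (n - 1 + 1), (qpoly t i).coeff m * ∑ k, d k * t k ^ m := by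
          rw [Finset.sum_comm]
          refine Finset.sum_congr rfl fun m _ => ?_
          rw [Finset.mul_sum]
          refine Finset.sum_congr rfl fun k _ => by ring
      _ = ∑ k, d k * t k ^ (n - 1) := by
          rw [Finset.sum_eq_single (n - 1)]
          · rw [qpoly_coeff, one_mul]
          · intro m hm hne
            have : m ≤ n - 2 := by
              have := Finset.mem_range.mp hm; omega
            rw [hd m this, mul_zero]
          · intro h; exact absurd (Finset.self_mem_range_succ _) h
  have := key.symm.trans key2
  rw [cf, eq_comm, mul_inv_eq_iff_eq_mul₀ (prod_diff_ne_zero ht i)]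
  linarith [this]

/-- `cf` is a dependence: `∑ c_i t_i^m = 0` for `m ≤ n - 2`. -/
lemma cf_dep {n : ℕ} {t : Fin n → ℝ} (ht : Function.Injective t) (hn : 2 ≤ n)
    {m : ℕ} (hm : m ≤ n - 2) : ∑ i, cf t i * t i ^ m = 0 := by
  set r : ℝ[X] := ∑ i, C (t i ^ m * cf t i) * qpoly t i with hr
  have hreval : ∀ k, r.eval (t k) = t k ^ m := by
    intro k
    rw [hr, eval_finset_sum, Fintype.sum_eq_single k]
    · rw [eval_mul, eval_C, qpoly_eval_self, cf, mul_assoc,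
        inv_mul_cancel₀ (prod_diff_ne_zero ht k), mul_one]
    · intro i hi
      rw [eval_mul, qpoly_eval_ne t i k hi.symm, mul_zero]
  have hdegr : r.natDegree ≤ n - 1 := by
    refine (natDegree_sum_le _ _).trans ?_
    rw [Finset.fold_max_le]
    refine ⟨Nat.zero_le _, fun i _ => ?_⟩
    refine (natDegree_mul_le).trans ?_
    rw [natDegree_C, qpoly_natDegree, zero_add]
  have hzero : r - X ^ m = 0 := by
    refine Polynomial.eq_zero_of_natDegree_lt_card_of_eval_eq_zero (r - X ^ m) ht ?_ ?_
    · intro k; simp [hreval k]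
    · refine lt_of_le_of_lt (natDegree_sub_le _ _) ?_
      simp only [natDegree_X_pow, Fintype.card_fin]
      omega
  have hre : r = X ^ m := by linear_combination (norm := ring_nf) hzero
  have hcoeff : r.coeff (n - 1) = 0 := by
    rw [hre, coeff_X_pow, if_neg (by omega)]
  rw [hr] at hcoeff
  rw [finset_sum_coeff] at hcoeff
  simp only [coeff_C_mul, qpoly_coeff, mul_one] at hcoeff
  calc ∑ i, cf t i * t i ^ m = ∑ i, t i ^ m * cf t i := by
        exact Finset.sum_congr rfl fun i _ => mul_comm _ _
    _ = 0 := hcoeff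

/-- Sign of `cf`: alternating along the curve. -/
lemma cf_pos_iff {n : ℕ} {t : Fin n → ℝ} (ht : StrictMono t) (i : Fin n) :
    0 < cf t i ↔ Even (n - 1 - i.1) := by
  rw [cf, inv_pos]
  have hsplit : Finset.univ.erase i =
      (Finset.univ.erase i).filter (fun j => j < i) ∪
      (Finset.univ.erase i).filter (fun j => ¬ j < i) :=
    (Finset.filter_union_filter_not_eq _ _).symm
  have hdisj := Finset.disjoint_filter_filter_not (Finset.univ.erase i) (Finset.univ.erase i)
      (fun j => j < i)
  rw [hsplit, Finset.prod_union hdisj]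
  have hIoi : (Finset.univ.erase i).filter (fun j => ¬ j < i) = Finset.Ioi i := by
    ext j
    simp only [Finset.mem_filter, Finset.mem_erase, Finset.mem_univ, Finset.mem_Ioi, true_and,
      and_true, not_lt]
    constructor
    · rintro ⟨hne, hle⟩; exact lt_of_le_of_ne hle (Ne.symm hne)
    · intro h; exact ⟨(ne_of_lt h).symm, le_of_lt h⟩
  have h1 : 0 < ∏ j ∈ (Finset.univ.erase i).filter (fun j => j < i), (t i - t j) :=
    Finset.prod_pos fun j hj => sub_pos.mpr (ht (Finset.mem_filter.mp hj).2)
  have h2 : ∏ j ∈ Finset.Ioi i, (t i - t j)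
      = (-1 : ℝ) ^ (n - 1 - i.1) * ∏ j ∈ Finset.Ioi i, (t j - t i) := by
    rw [← Fin.card_Ioi i]
    rw [← Finset.prod_const (-1 : ℝ), ← Finset.prod_mul_distrib]
    exact Finset.prod_congr rfl fun j _ => by ring
  have h3 : 0 < ∏ j ∈ Finset.Ioi i, (t j - t i) :=
    Finset.prod_pos fun j hj => sub_pos.mpr (ht (Finset.mem_Ioi.mp hj))
  rw [hIoi, h2]
  rcases Nat.even_or_odd (n - 1 - i.1) with he | ho
  · simp only [he, iff_true, he.neg_one_pow, one_mul]
    positivity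
  · simp only [Nat.not_even_iff_odd.mpr ho, iff_false, ho.neg_one_pow, not_lt]
    nlinarith [mul_pos h1 h3]

lemma momentCurve_inj {D n : ℕ} (hD : 0 < D) {t : Fin n → ℝ} (ht : Function.Injective t) :
    Function.Injective (fun i => momentCurve D (t i)) := by
  intro i j h
  have := congrFun h ⟨0, hD⟩
  simp only [momentCurve] at this
  rw [pow_one, pow_one] at this
  exact ht this

lemma mem_mcConv {D n : ℕ} (hD : 0 < D) {t : Fin n → ℝ} (ht : Function.Injective t)
    (σ : Finset (Fin n)) (x : Fin D → ℝ) :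
    x ∈ mcConv D t σ ↔ ∃ w : Fin n → ℝ, (∀ i, 0 ≤ w i) ∧ (∀ i, i ∉ σ → w i = 0) ∧
      ∑ i, w i = 1 ∧ ∑ i, w i • momentCurve D (t i) = x := by
  set P : Fin n → (Fin D → ℝ) := fun i => momentCurve D (t i) with hP
  have hPinj : Function.Injective P := momentCurve_inj hD ht
  constructor
  · intro hx
    have hx' : x ∈ convexHull ℝ ↑(σ.image P) := by
      rwa [mcConv, ← Finset.coe_image] at hx
    rw [Finset.convexHull_eq] at hx'
    obtain ⟨w, hw0, hwsum, hwx⟩ := hx'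
    have hinj : Set.InjOn P ↑σ := Function.Injective.injOn hPinj
    refine ⟨fun i => if i ∈ σ then w (P i) else 0, ?_, ?_, ?_, ?_⟩
    · intro i; dsimp only; split
      · exact hw0 _ (Finset.mem_image_of_mem P ‹_›)
      · exact le_refl 0
    · intro i hi; simp [hi]
    · rw [Finset.sum_ite_mem, Finset.univ_inter, ← Finset.sum_image (fun i hi j hj h => hinj hi hj h)]
      exact hwsum
    · have : ∀ i ∈ Finset.univ, (if i ∈ σ then w (P i) else 0) • momentCurve D (t i)
          = if i ∈ σ then w (P i) • P i else 0 := by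
        intro i _; split <;> simp [hP]
      have hsi : ∑ y ∈ σ.image P, w y • y = ∑ i ∈ σ, w (P i) • P i :=
        Finset.sum_image (fun i hi j hj h => hinj hi hj h)
      rw [Finset.sum_congr rfl this, Finset.sum_ite_mem, Finset.univ_inter, ← hsi]
      rw [Finset.centerMass_eq_of_sum_1 _ id hwsum] at hwx
      simpa using hwx
  · rintro ⟨w, hw0, hwsupp, hwsum, hwx⟩
    have hsum' : ∑ i ∈ σ, w i = 1 := by
      rw [← hwsum]
      exact Finset.sum_subset (Finset.subset_univ σ) (fun i _ hi => hwsupp i hi)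
    have hx' : σ.centerMass w P = x := by
      rw [Finset.centerMass_eq_of_sum_1 _ _ hsum', ← hwx]
      exact Finset.sum_subset (Finset.subset_univ σ)
        (fun i _ hi => by rw [hwsupp i hi, zero_smul])
    rw [← hx']
    exact Finset.centerMass_mem_convexHull σ (fun i _ => hw0 i) (by rw [hsum']; norm_num)
      (fun i hi => Set.mem_image_of_mem _ hi)

lemma dep_of_two_reps {D n : ℕ} (hn : n = D + 2) {t : Fin n → ℝ} {w v : Fin n → ℝ}
    (hsum : ∑ i, w i = ∑ i, v i)
    (hvec : ∑ i, w i • momentCurve D (t i) = ∑ i, v i • momentCurve D (t i)) :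
    ∀ m, m ≤ n - 2 → ∑ i, (w i - v i) * t i ^ m = 0 := by
  intro m hm
  have key : ∑ i, w i * t i ^ m = ∑ i, v i * t i ^ m := by
    rcases Nat.eq_zero_or_pos m with h0 | hpos
    · subst h0; simpa using hsum
    · have hmD : m - 1 < D := by omega
      have h := congrFun hvec ⟨m - 1, hmD⟩
      rw [Finset.sum_apply, Finset.sum_apply] at h
      have hmm : m - 1 + 1 = m := by omega
      simpa [momentCurve, Pi.smul_apply, smul_eq_mul, hmm] using h
  simp only [sub_mul]
  rw [Finset.sum_sub_distrib, key, sub_self]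

/-- Construction of the triangulation from a positivity class. -/
lemma tri_of_pos (D n : ℕ) (hD : 2 ≤ D) (hn : n = D + 2)
    (t : Fin n → ℝ) (ht : StrictMono t) (b : Fin n → ℝ)
    (hb0 : ∀ i, b i ≠ 0)
    (hdep : ∀ m, m ≤ n - 2 → ∑ i, b i * t i ^ m = 0)
    (huniq : ∀ d : Fin n → ℝ, (∀ m, m ≤ n - 2 → ∑ i, d i * t i ^ m = 0) →
      ∃ s : ℝ, ∀ i, d i = s * b i)
    (i₁ i₂ : Fin n) (hi12 : i₁ ≠ i₂) (hb1 : 0 < b i₁) (hb2 : 0 < b i₂) :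
    IsTriangulation D t Finset.univ
        ((Finset.univ.filter (fun i => 0 < b i)).image (fun i => Finset.univ.erase i)) ∧
      UsesAllVertices Finset.univ
        ((Finset.univ.filter (fun i => 0 < b i)).image (fun i => Finset.univ.erase i)) ∧
      ∀ σ : Finset (Fin n), (∃ i, 0 < b i ∧ i ∉ σ) → IsFaceOf σ
        ((Finset.univ.filter (fun i => 0 < b i)).image (fun i => Finset.univ.erase i)) := by
  have hD0 : 0 < D := by omega
  have htinj : Function.Injective t := ht.injective
  set T := (Finset.univ.filter (fun i => 0 < b i)).image (fun i => Finset.univ.erase i) with hT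
  have hmemT : ∀ σ ∈ T, ∃ i, 0 < b i ∧ σ = Finset.univ.erase i := by
    intro σ hσ
    rw [hT, Finset.mem_image] at hσ
    obtain ⟨i, hi, rfl⟩ := hσ
    exact ⟨i, (Finset.mem_filter.mp hi).2, rfl⟩
  refine ⟨⟨?_, ?_, ?_⟩, ?_, ?_⟩
  · -- cards
    intro σ hσ
    obtain ⟨i, _, rfl⟩ := hmemT σ hσ
    constructor
    · rw [Finset.card_erase_of_mem (Finset.mem_univ i), Finset.card_univ, Fintype.card_fin]
      omega
    · exact Finset.erase_subset _ _ |>.trans (Finset.Subset.refl _)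
  · -- pairwise non-overlap
    intro σ hσ τ hτ hne
    obtain ⟨i, hbi, rfl⟩ := hmemT σ hσ
    obtain ⟨j, hbj, rfl⟩ := hmemT τ hτ
    have hij : i ≠ j := fun h => hne (by rw [h])
    intro hov
    apply hov
    rintro x ⟨hx1, hx2⟩
    rw [mem_mcConv hD0 htinj] at hx1 hx2
    obtain ⟨w, hw0, hwsupp, hwsum, hwx⟩ := hx1
    obtain ⟨v, hv0, hvsupp, hvsum, hvx⟩ := hx2
    have hdep' := dep_of_two_reps hn (hwsum.trans hvsum.symm) (hwx.trans hvx.symm)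
    obtain ⟨s, hs⟩ := huniq _ hdep'
    have hwi : w i = 0 := hwsupp i (by simp)
    have hvj : v j = 0 := hvsupp j (by simp)
    have hsi := hs i
    have hsj := hs j
    rw [hwi] at hsi
    rw [hvj] at hsj
    -- hsi : 0 - v i = s * b i, hsj : w j - 0 = s * b j
    have hsle : s ≤ 0 := by nlinarith [hv0 i]
    have hsge : 0 ≤ s := by nlinarith [hw0 j]
    have hs0 : s = 0 := le_antisymm hsle hsge
    have hwv : ∀ k, w k = v k := by
      intro k; have := hs k; rw [hs0, zero_mul, sub_eq_zero] at this; exact this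
    rw [mem_mcConv hD0 htinj]
    refine ⟨w, hw0, ?_, hwsum, hwx⟩
    intro k hk
    rw [Finset.mem_inter] at hk
    push_neg at hk
    by_cases hki : k ∈ Finset.univ.erase i
    · have := hk hki
      have : k = j := by simpa using this
      rw [hwv k, this, hvj]
    · have : k = i := by simpa using hki
      rw [this, hwi]
  · -- coverage
    intro p hp
    rw [mem_mcConv hD0 htinj] at hp
    obtain ⟨μ, hμ0, _, hμsum, hμp⟩ := hp
    have hne : (Finset.univ.filter (fun i => 0 < b i)).Nonempty :=
      ⟨i₁, Finset.mem_filter.mpr ⟨Finset.mem_univ _, hb1⟩⟩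
    obtain ⟨i₀, hi₀mem, hi₀min⟩ := Finset.exists_min_image _ (fun i => μ i / b i) hne
    have hbi₀ : 0 < b i₀ := (Finset.mem_filter.mp hi₀mem).2
    set s := μ i₀ / b i₀ with hs
    have hs0 : 0 ≤ s := div_nonneg (hμ0 i₀) hbi₀.le
    set ν : Fin n → ℝ := fun k => μ k - s * b k with hν
    have hν0 : ∀ k, 0 ≤ ν k := by
      intro k
      by_cases hk : 0 < b k
      · have := hi₀min k (Finset.mem_filter.mpr ⟨Finset.mem_univ _, hk⟩)
        rw [hν]; dsimp only
        rw [sub_nonneg, ← le_div_iff₀ hk]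
        exact this
      · have hk' : b k < 0 := (hb0 k).lt_of_le (not_lt.mp hk)
        have : 0 ≤ -(s * b k) := by nlinarith
        have := hμ0 k
        rw [hν]; dsimp only; linarith
    refine ⟨Finset.univ.erase i₀, ?_, ?_⟩
    · rw [hT, Finset.mem_image]; exact ⟨i₀, hi₀mem, rfl⟩
    · rw [mem_mcConv hD0 htinj]
      refine ⟨ν, hν0, ?_, ?_, ?_⟩
      · intro k hk
        have : k = i₀ := by simpa using hk
        rw [this, hν]; dsimp only
        rw [hs, div_mul_cancel₀ _ (ne_of_gt hbi₀), sub_self]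
      · rw [hν]
        simp only
        rw [Finset.sum_sub_distrib, ← Finset.mul_sum]
        have h0 : ∑ i, b i = 0 := by
          have := hdep 0 (by omega)
          simpa using this
        rw [h0, mul_zero, sub_zero, hμsum]
      · rw [hν]
        simp only [sub_smul, mul_smul]
        rw [Finset.sum_sub_distrib, ← Finset.smul_sum]
        have h0 : ∑ i, b i • momentCurve D (t i) = 0 := by
          funext m
          rw [Finset.sum_apply]
          simp only [Pi.smul_apply, smul_eq_mul, momentCurve]
          rw [Pi.zero_apply]
          exact hdep (m.1 + 1) (by omega)
        rw [h0, smul_zero, sub_zero, hμp]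
  · -- uses all vertices
    intro a _
    rcases ne_or_eq i₁ a with h | h
    · exact ⟨Finset.univ.erase i₁,
        Finset.mem_image.mpr ⟨i₁, Finset.mem_filter.mpr ⟨Finset.mem_univ _, hb1⟩, rfl⟩,
        Finset.mem_erase.mpr ⟨h.symm, Finset.mem_univ _⟩⟩
    · refine ⟨Finset.univ.erase i₂,
        Finset.mem_image.mpr ⟨i₂, Finset.mem_filter.mpr ⟨Finset.mem_univ _, hb2⟩, rfl⟩,
        Finset.mem_erase.mpr ⟨?_, Finset.mem_univ _⟩⟩
      rw [← h]; exact hi12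
  · -- faces
    rintro σ ⟨i, hbi, hiσ⟩
    exact ⟨Finset.univ.erase i,
      Finset.mem_image.mpr ⟨i, Finset.mem_filter.mpr ⟨Finset.mem_univ _, hbi⟩, rfl⟩,
      fun k hk => Finset.mem_erase.mpr ⟨fun h => hiσ (h ▸ hk), Finset.mem_univ _⟩⟩

lemma sum_cf_smul {D n : ℕ} (hn : n = D + 2) {t : Fin n → ℝ} (ht : Function.Injective t)
    (b : Fin n → ℝ) (hdep : ∀ m, m ≤ n - 2 → ∑ i, b i * t i ^ m = 0) :
    ∑ k, b k • momentCurve D (t k) = 0 := by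
  funext m
  rw [Finset.sum_apply]
  simp only [Pi.smul_apply, smul_eq_mul, momentCurve]
  rw [Pi.zero_apply]
  exact hdep (m.1 + 1) (by omega)

lemma overlap_of_contains (D n : ℕ) (hD : 2 ≤ D) (hn : n = D + 2)
    (t : Fin n → ℝ) (ht : StrictMono t)
    (σ τ : Finset (Fin n)) (hσc : σ.card ≤ D + 1) (hτc : τ.card ≤ D + 1)
    (hσ : ∀ i, 0 < cf t i → i ∈ σ) (hτ : ∀ i, cf t i < 0 → i ∈ τ)
    (e0 : Fin n) (he0 : 0 < cf t e0) :
    Overlap D t σ τ := by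
  have hD0 : 0 < D := by omega
  have hn2 : 2 ≤ n := by omega
  have htinj := ht.injective
  have hb0 : ∀ i, cf t i ≠ 0 := cf_ne_zero htinj
  set c : Fin n → ℝ := cf t with hc
  have hdep : ∀ m, m ≤ n - 2 → ∑ i, c i * t i ^ m = 0 := fun m hm => cf_dep htinj hn2 hm
  set Pos := Finset.univ.filter (fun i => 0 < c i) with hPos
  have hPosne : Pos.Nonempty := ⟨e0, Finset.mem_filter.mpr ⟨Finset.mem_univ _, he0⟩⟩
  set S := ∑ i ∈ Pos, c i with hS
  have hS0 : 0 < S := Finset.sum_pos (fun i hi => (Finset.mem_filter.mp hi).2) hPosne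
  set w : Fin n → ℝ := fun k => if 0 < c k then c k / S else 0 with hw
  set w' : Fin n → ℝ := fun k => if 0 < c k then 0 else -c k / S with hw'
  have hdiff : ∀ k, w k - w' k = c k / S := by
    intro k; rw [hw, hw']; dsimp only; split <;> ring
  have hwsum : ∑ k, w k = 1 := by
    rw [hw]
    rw [← Finset.sum_filter, ← hPos, ← Finset.sum_div, ← hS, div_self (ne_of_gt hS0)]
  have hsumc : ∑ k, c k = 0 := by
    have := hdep 0 (by omega); simpa using this
  have hsmulc : ∑ k, c k • momentCurve D (t k) = 0 := sum_cf_smul hn htinj c hdep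
  have hw'sum : ∑ k, w' k = 1 := by
    have h1 : ∑ k, (w k - w' k) = 0 := by
      rw [Finset.sum_congr rfl (fun k _ => hdiff k), ← Finset.sum_div, hsumc, zero_div]
    rw [Finset.sum_sub_distrib] at h1
    linarith [hwsum]
  have hvec : ∑ k, w' k • momentCurve D (t k) = ∑ k, w k • momentCurve D (t k) := by
    have h1 : ∑ k, (w k - w' k) • momentCurve D (t k) = 0 := by
      rw [Finset.sum_congr rfl (fun k _ => by rw [hdiff k, div_eq_inv_mul, mul_smul])]
      rw [← Finset.smul_sum, hsmulc, smul_zero]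
    simp only [sub_smul] at h1
    rw [Finset.sum_sub_distrib] at h1
    have := sub_eq_zero.mp h1
    exact this.symm
  set p := ∑ k, w k • momentCurve D (t k) with hp
  have hpσ : p ∈ mcConv D t σ := by
    rw [mem_mcConv hD0 htinj]
    refine ⟨w, ?_, ?_, hwsum, rfl⟩
    · intro k; rw [hw]; dsimp only; split
      · positivity
      · exact le_refl 0
    · intro k hk; rw [hw]; dsimp only
      rw [if_neg (fun hck => hk (hσ k hck))]
  have hpτ : p ∈ mcConv D t τ := by
    rw [mem_mcConv hD0 htinj]
    refine ⟨w', ?_, ?_, hw'sum, hvec⟩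
    · intro k; rw [hw']; dsimp only; split
      · exact le_refl 0
      · rename_i hck
        have : c k < 0 := (hb0 k).lt_of_le (not_lt.mp hck)
        exact div_nonneg (by linarith) hS0.le
    · intro k hk; rw [hw']; dsimp only
      rw [if_pos]
      have : ¬ c k < 0 := fun hck => hk (hτ k hck)
      exact (hb0 k).lt_of_le' (not_lt.mp this)
  intro hsub
  have hpint := hsub ⟨hpσ, hpτ⟩
  rw [mem_mcConv hD0 htinj] at hpint
  obtain ⟨u, hu0, husupp, husum, huvec⟩ := hpint
  have hd := dep_of_two_reps hn (husum.trans hwsum.symm) (huvec.trans hp)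
  have hrep := fun i => rep htinj hn2 (fun k => u k - w k) hd i
  set S'' := ∑ k, (u k - w k) * t k ^ (n - 1) with hS''
  -- find e ∉ τ with 0 < c e, and f ∉ σ with c f < 0
  obtain ⟨e, he⟩ : ∃ e, e ∉ τ := by
    by_contra h; push_neg at h
    have : τ = Finset.univ := Finset.eq_univ_iff_forall.mpr h
    rw [this, Finset.card_univ, Fintype.card_fin] at hτc; omega
  obtain ⟨f, hf⟩ : ∃ f, f ∉ σ := by
    by_contra h; push_neg at h
    have : σ = Finset.univ := Finset.eq_univ_iff_forall.mpr h
    rw [this, Finset.card_univ, Fintype.card_fin] at hσc; omega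
  have hce : 0 < c e := (hb0 e).lt_of_le' (not_lt.mp (fun hck => he (hτ e hck)))
  have hcf : c f < 0 := (hb0 f).lt_of_le (not_lt.mp (fun hck => hf (hσ f hck)))
  have hue : u e = 0 := husupp e (fun hmem => he (Finset.mem_inter.mp hmem).2)
  have huf : u f = 0 := husupp f (fun hmem => hf (Finset.mem_inter.mp hmem).1)
  have hwe : w e = c e / S := by rw [hw]; dsimp only; rw [if_pos hce]
  have hwf : w f = 0 := by rw [hw]; dsimp only; rw [if_neg (not_lt.mpr hcf.le)]
  have heq1 := hrep e
  have heq2 := hrep f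
  rw [hue, hwe] at heq1
  rw [huf, hwf] at heq2
  -- heq2 : 0 - 0 = S'' * c f  →  S'' = 0
  have hS''0 : S'' = 0 := by
    have := heq2.symm
    rw [sub_zero] at this
    rcases mul_eq_zero.mp this with h | h
    · exact h
    · exact absurd h (hb0 f)
  rw [hS''0, zero_mul, zero_sub, neg_eq_zero] at heq1
  rcases _root_.div_eq_zero_iff.mp heq1 with h | h
  · exact hb0 e h
  · exact (ne_of_gt hS0) h


end AuxExtFew

set_option maxHeartbeats 1000000 in
/-- **Proposition (few vertices).** For `D ≥ 2` and `D + 1 ≤ n ≤ D + 2`, every finite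
collection of pairwise non-overlapping simplices on an `n`-point set `A` on `γ_D` can be
extended to a triangulation of `conv(A)` with vertex set `A`. -/
theorem extension_with_few_vertices
    (D n : ℕ) (hD : 2 ≤ D) (hn1 : D + 1 ≤ n) (hn2 : n ≤ D + 2)
    (t : Fin n → ℝ) (ht : StrictMono t)
    (F : Finset (Finset (Fin n)))
    (hFcard : ∀ σ ∈ F, σ.card ≤ D + 1)
    (hFno : ∀ σ ∈ F, ∀ τ ∈ F, σ ≠ τ → ¬ Overlap D t σ τ) :
    ∃ T : Finset (Finset (Fin n)),
      IsTriangulation D t Finset.univ T ∧ UsesAllVertices Finset.univ T ∧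
      ∀ σ ∈ F, IsFaceOf σ T := by
  have htinj := ht.injective
  rcases (by omega : n = D + 1 ∨ n = D + 2) with hn | hn
  · -- single simplex
    refine ⟨{Finset.univ}, ⟨?_, ?_, ?_⟩, ?_, ?_⟩
    · intro σ hσ
      rw [Finset.mem_singleton] at hσ
      subst hσ
      exact ⟨by rw [Finset.card_univ, Fintype.card_fin]; omega, Finset.Subset.refl _⟩
    · intro σ hσ τ hτ hne
      rw [Finset.mem_singleton] at hσ hτ
      exact absurd (hσ.trans hτ.symm) hne
    · intro p hp
      exact ⟨Finset.univ, Finset.mem_singleton_self _, hp⟩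
    · intro a _
      exact ⟨Finset.univ, Finset.mem_singleton_self _, Finset.mem_univ a⟩
    · intro σ _
      exact ⟨Finset.univ, Finset.mem_singleton_self _, Finset.subset_univ σ⟩
  · -- n = D + 2
    have hn2' : 2 ≤ n := by omega
    have hb0 : ∀ i, cf t i ≠ 0 := cf_ne_zero htinj
    have hdep : ∀ m, m ≤ n - 2 → ∑ i, cf t i * t i ^ m = 0 :=
      fun m hm => cf_dep htinj hn2' hm
    have huniq : ∀ d : Fin n → ℝ, (∀ m, m ≤ n - 2 → ∑ i, d i * t i ^ m = 0) →
        ∃ s : ℝ, ∀ i, d i = s * cf t i :=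
      fun d hd => ⟨∑ k, d k * t k ^ (n - 1), fun i => rep htinj hn2' d hd i⟩
    have hpos : ∀ i : Fin n, Even (n - 1 - i.1) → 0 < cf t i :=
      fun i h => (cf_pos_iff ht i).mpr h
    have hneg : ∀ i : Fin n, ¬ Even (n - 1 - i.1) → cf t i < 0 :=
      fun i h => (hb0 i).lt_of_le (not_lt.mp (fun hc => h ((cf_pos_iff ht i).mp hc)))
    set i₁ : Fin n := ⟨n - 1, by omega⟩ with hi₁
    set i₂ : Fin n := ⟨n - 3, by omega⟩ with hi₂
    set j₁ : Fin n := ⟨n - 2, by omega⟩ with hj₁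
    set j₂ : Fin n := ⟨n - 4, by omega⟩ with hj₂
    have hpos' : ∀ (v : ℕ) (hv : v < n), Even (n - 1 - v) → 0 < cf t ⟨v, hv⟩ :=
      fun v hv h => hpos ⟨v, hv⟩ h
    have hneg' : ∀ (v : ℕ) (hv : v < n), ¬ Even (n - 1 - v) → cf t ⟨v, hv⟩ < 0 :=
      fun v hv h => hneg ⟨v, hv⟩ h
    have hpi₁ : 0 < cf t i₁ := by rw [hi₁]; exact hpos' (n - 1) (by omega) ⟨0, by omega⟩
    have hpi₂ : 0 < cf t i₂ := by rw [hi₂]; exact hpos' (n - 3) (by omega) ⟨1, by omega⟩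
    have hnj₁ : cf t j₁ < 0 := by
      rw [hj₁]; exact hneg' (n - 2) (by omega) (fun ⟨r, hr⟩ => by omega)
    have hnj₂ : cf t j₂ < 0 := by
      rw [hj₂]; exact hneg' (n - 4) (by omega) (fun ⟨r, hr⟩ => by omega)
    have hi12 : i₁ ≠ i₂ := by
      intro h
      have := congrArg Fin.val h
      simp only [hi₁, hi₂] at this
      omega
    have hj12 : j₁ ≠ j₂ := by
      intro h
      have := congrArg Fin.val h
      simp only [hj₁, hj₂] at this
      omega
    by_cases hcase : ∃ σ ∈ F, ∀ i, 0 < cf t i → i ∈ σ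
    · by_cases hcase2 : ∃ τ ∈ F, ∀ i, cf t i < 0 → i ∈ τ
      · exfalso
        obtain ⟨σ, hσF, hσ⟩ := hcase
        obtain ⟨τ, hτF, hτ⟩ := hcase2
        have hστ : σ ≠ τ := by
          intro h
          subst h
          have hsub : Finset.univ ⊆ σ := by
            intro i _
            rcases lt_or_gt_of_ne (hb0 i) with h' | h'
            · exact hτ i h'
            · exact hσ i h'
          have := Finset.card_le_card hsub
          rw [Finset.card_univ, Fintype.card_fin] at this
          have := hFcard σ hσF
          omega
        exact hFno σ hσF τ hτF hστ
          (overlap_of_contains D n hD hn t ht σ τ (hFcard σ hσF) (hFcard τ hτF) hσ hτ i₁ hpi₁)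
      · -- use b = -cf t
        push_neg at hcase2
        have hb0' : ∀ i, -cf t i ≠ 0 := fun i => neg_ne_zero.mpr (hb0 i)
        have hdep' : ∀ m, m ≤ n - 2 → ∑ i, -cf t i * t i ^ m = 0 := by
          intro m hm
          have := hdep m hm
          rw [← neg_eq_zero, ← Finset.sum_neg_distrib] at this
          convert this using 2 with i
          ring
        have huniq' : ∀ d : Fin n → ℝ, (∀ m, m ≤ n - 2 → ∑ i, d i * t i ^ m = 0) →
            ∃ s : ℝ, ∀ i, d i = s * (-cf t i) := by
          intro d hd
          obtain ⟨s, hs⟩ := huniq d hd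
          exact ⟨-s, fun i => by rw [hs i]; ring⟩
        obtain ⟨hTri, hUse, hFace⟩ := tri_of_pos D n hD hn t ht (fun i => -cf t i)
          hb0' hdep' huniq' j₁ j₂ hj12 (by simpa using hnj₁) (by simpa using hnj₂)
        refine ⟨_, hTri, hUse, fun σ hσ => hFace σ ?_⟩
        obtain ⟨i, hi1, hi2⟩ := hcase2 σ hσ
        exact ⟨i, by simpa using hi1, hi2⟩
    · push_neg at hcase
      obtain ⟨hTri, hUse, hFace⟩ := tri_of_pos D n hD hn t ht (cf t)
        hb0 hdep huniq i₁ i₂ hi12 hpi₁ hpi₂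
      refine ⟨_, hTri, hUse, fun σ hσ => hFace σ ?_⟩
      obtain ⟨i, hi1, hi2⟩ := hcase σ hσ
      exact ⟨i, hi1, hi2⟩
end
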